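/- Let T be a left continuous t-norm and L a right continuous L-operation. If (L⊗T)(f,g) is continuous on (0,∞] for all continuous d.d.f.'s f and g, then L satisfies the strict monotonicity condition (LS): x < x' and y < y' imply L(x,y) < L(x',y'). -/

import Mathlib

open ENNReal Set

/-- A distance distribution function: increasing `f : [0,∞] → [0,1]` with
`f 0 = 0`, `f ∞ = 1`, left continuous on `(0,∞)`. -/
def IsDDF (f : ℝ≥0∞ → ℝ≥0∞) : Prop :=
  Monotone f ∧ (∀ x, f x ≤ 1) ∧ f 0 = 0 ∧ f ⊤ = 1 ∧
    ∀ x : ℝ≥0∞, 0 < x → x < ⊤ → f x = ⨆ y ∈ Set.Iio x, f y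

/-- The largest quasi-inverse `f∨ y = inf {x | f x > y}`. -/
noncomputable def qInv (f : ℝ≥0∞ → ℝ≥0∞) : ℝ≥0∞ → ℝ≥0∞ :=
  fun y => sInf {x | y < f x}

/-- The unit interval `[0,1]` inside `[0,∞]`. -/
def I01 : Set ℝ≥0∞ := Set.Icc 0 1

/-- A left continuous t-norm on `[0,1]`: commutative, associative, increasing in each
place, identity `1`, left continuous in each variable. -/
def IsLeftContTNorm (T : ℝ≥0∞ → ℝ≥0∞ → ℝ≥0∞) : Prop :=
  (∀ p ∈ I01, ∀ q ∈ I01, T p q ∈ I01) ∧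
  (∀ p ∈ I01, ∀ q ∈ I01, T p q = T q p) ∧
  (∀ p ∈ I01, ∀ q ∈ I01, ∀ r ∈ I01, T (T p q) r = T p (T q r)) ∧
  (∀ p ∈ I01, T p 1 = p) ∧
  (∀ q ∈ I01, ∀ p₁ ∈ I01, ∀ p₂ ∈ I01, p₁ ≤ p₂ → T p₁ q ≤ T p₂ q) ∧
  (∀ q ∈ I01, ∀ p ∈ I01, 0 < p → T p q = ⨆ p' ∈ Set.Iio p, T p' q)

/-- A right continuous `L`-operation on `[0,∞]`: commutative, associative, increasing in
each place, identity `0`, right continuous in each variable. -/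
def IsRightContLOp (L : ℝ≥0∞ → ℝ≥0∞ → ℝ≥0∞) : Prop :=
  (∀ x y, L x y = L y x) ∧
  (∀ x y z, L (L x y) z = L x (L y z)) ∧
  (∀ x, L x 0 = x) ∧
  (∀ y x₁ x₂, x₁ ≤ x₂ → L x₁ y ≤ L x₂ y) ∧
  (∀ y x, x < ⊤ → L x y = ⨅ x' ∈ Set.Ioi x, L x' y)

/-- Joint continuity of a t-norm on `[0,1] × [0,1]`. -/
def TNormContinuous (T : ℝ≥0∞ → ℝ≥0∞ → ℝ≥0∞) : Prop :=
  ContinuousOn (fun pq : ℝ≥0∞ × ℝ≥0∞ => T pq.1 pq.2) (I01 ×ˢ I01)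

/-- The tensor-product triangle function:
`(L ⊗ T)(f,g)(x) = sup {T (f r) (g s) | L r s < x}` for `x < ∞`, and `1` at `∞`. -/
noncomputable def tensor (L T : ℝ≥0∞ → ℝ≥0∞ → ℝ≥0∞) (f g : ℝ≥0∞ → ℝ≥0∞) :
    ℝ≥0∞ → ℝ≥0∞ :=
  fun x => if x = ⊤ then 1 else ⨆ r, ⨆ s, ⨆ _ : L r s < x, T (f r) (g s)

open Topology

/-!
If `L x y = L x' y'` with `x < x'` and `y < y'`, take continuous d.d.f.'s `f`, `g` rising from
`0` at `x`, `y` to `1` before `x'`, `y'`. Whenever `L r s < t ≤ L x y`, monotonicity of `L`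
forces `r < x` or `s < y`, so `(L ⊗ T)(f,g)` vanishes up to `L x y`; beyond it, `(x', y')`
is admissible and the value is `1`. A continuous map on the connected set `(0,∞]` cannot take
exactly the two values `0` and `1`.
-/

lemma isDDF_of_monotone_of_continuous {f : ℝ≥0∞ → ℝ≥0∞} (hm : Monotone f) (hc : Continuous f)
    (h0 : f 0 = 0) (htop : f ⊤ = 1) : IsDDF f := by
  refine ⟨hm, fun x => htop ▸ hm le_top, h0, htop, fun x hx _ => ?_⟩
  have : (𝓝[<] x).NeBot := by
    rw [← mem_closure_iff_nhdsWithin_neBot, closure_Iio' ⟨0, hx⟩]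
    exact self_mem_Iic
  rw [← sSup_image]
  exact tendsto_nhds_unique (hc.tendsto x |>.mono_left nhdsWithin_le_nhds) (hm.tendsto_nhdsLT x)

noncomputable def ramp (a b : ℝ≥0∞) : ℝ≥0∞ → ℝ≥0∞ :=
  fun t => min 1 ((t - a) / (b - a))

section Ramp

variable {a b t : ℝ≥0∞}

lemma monotone_ramp : Monotone (ramp a b) := fun _ _ h =>
  min_le_min le_rfl (ENNReal.div_le_div_right (tsub_le_tsub_right h a) _)

lemma ramp_le_one : ramp a b t ≤ 1 := min_le_left _ _

lemma ramp_of_le (ht : t ≤ a) : ramp a b t = 0 := by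
  simp [ramp, tsub_eq_zero_of_le ht]

lemma ramp_of_ge (hab : a < b) (hb : b ≠ ⊤) (ht : b ≤ t) : ramp a b t = 1 := by
  refine min_eq_left ?_
  rw [ENNReal.le_div_iff_mul_le (Or.inl (tsub_pos_of_lt hab).ne')
    (Or.inl (tsub_le_self.trans_lt hb.lt_top).ne), one_mul]
  exact tsub_le_tsub_right ht a

lemma continuous_ramp (hab : a < b) : Continuous (ramp a b) :=
  continuous_const.min <|
    (ENNReal.continuous_div_const _ (tsub_pos_of_lt hab).ne').comp (ENNReal.continuous_sub_right a)

lemma isDDF_ramp (hab : a < b) (hb : b ≠ ⊤) : IsDDF (ramp a b) :=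
  isDDF_of_monotone_of_continuous monotone_ramp (continuous_ramp hab)
    (ramp_of_le zero_le) (ramp_of_ge hab hb le_top)

end Ramp

namespace IsLeftContTNorm

variable {T : ℝ≥0∞ → ℝ≥0∞ → ℝ≥0∞}

lemma zero_left (hT : IsLeftContTNorm T) {q : ℝ≥0∞} (hq : q ∈ I01) : T 0 q = 0 := by
  obtain ⟨-, hcomm, -, hid, hmono, -⟩ := hT
  have h0 : (0 : ℝ≥0∞) ∈ I01 := ⟨le_rfl, zero_le_one⟩
  have h1 : (1 : ℝ≥0∞) ∈ I01 := ⟨zero_le_one, le_rfl⟩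
  refine le_antisymm ?_ zero_le
  calc T 0 q = T q 0 := hcomm 0 h0 q hq
    _ ≤ T 1 0 := hmono 0 h0 q hq 1 h1 hq.2
    _ = T 0 1 := hcomm 1 h1 0 h0
    _ = 0 := hid 0 h0

lemma zero_right (hT : IsLeftContTNorm T) {p : ℝ≥0∞} (hp : p ∈ I01) : T p 0 = 0 := by
  rw [hT.2.1 p hp 0 ⟨le_rfl, zero_le_one⟩, hT.zero_left hp]

lemma one_one (hT : IsLeftContTNorm T) : T 1 1 = 1 := hT.2.2.2.1 1 ⟨zero_le_one, le_rfl⟩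

lemma le_one (hT : IsLeftContTNorm T) {p q : ℝ≥0∞} (hp : p ∈ I01) (hq : q ∈ I01) :
    T p q ≤ 1 := (hT.1 p hp q hq).2

end IsLeftContTNorm

lemma IsRightContLOp.monotone₂ {L : ℝ≥0∞ → ℝ≥0∞ → ℝ≥0∞} (hL : IsRightContLOp L)
    {x x' y y' : ℝ≥0∞} (hx : x ≤ x') (hy : y ≤ y') : L x y ≤ L x' y' := by
  obtain ⟨hcomm, -, -, hmono, -⟩ := hL
  calc L x y ≤ L x' y := hmono y x x' hx
    _ = L y x' := hcomm _ _
    _ ≤ L y' x' := hmono x' y y' hy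
    _ = L x' y' := hcomm _ _

lemma IsRightContLOp.le_left {L : ℝ≥0∞ → ℝ≥0∞ → ℝ≥0∞} (hL : IsRightContLOp L) (x y : ℝ≥0∞) :
    x ≤ L x y :=
  calc x = L x 0 := (hL.2.2.1 x).symm
    _ ≤ L x y := hL.monotone₂ le_rfl zero_le

section Tensor

variable {L T : ℝ≥0∞ → ℝ≥0∞ → ℝ≥0∞} {f g : ℝ≥0∞ → ℝ≥0∞} {t : ℝ≥0∞}

lemma tensor_top : tensor L T f g ⊤ = 1 := if_pos rfl

lemma tensor_eq_zero (hT : IsLeftContTNorm T) (hf : ∀ r, f r ≤ 1) (hg : ∀ s, g s ≤ 1)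
    (ht : t ≠ ⊤) (hzero : ∀ r s, L r s < t → f r = 0 ∨ g s = 0) : tensor L T f g t = 0 := by
  simp only [tensor, if_neg ht, ENNReal.iSup_eq_zero]
  intro r s hrs
  rcases hzero r s hrs with hr | hs
  · rw [hr, hT.zero_left ⟨zero_le, hg s⟩]
  · rw [hs, hT.zero_right ⟨zero_le, hf r⟩]

lemma tensor_eq_one (hT : IsLeftContTNorm T) (hf : ∀ r, f r ≤ 1) (hg : ∀ s, g s ≤ 1)
    {r s : ℝ≥0∞} (hr : f r = 1) (hs : g s = 1) (hrs : L r s < t) : tensor L T f g t = 1 := by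
  rcases eq_or_ne t ⊤ with rfl | ht
  · exact tensor_top
  simp only [tensor, if_neg ht]
  refine le_antisymm (iSup₂_le fun r s => iSup_le fun _ =>
    hT.le_one ⟨zero_le, hf r⟩ ⟨zero_le, hg s⟩) ?_
  calc (1 : ℝ≥0∞) = T (f r) (g s) := by rw [hr, hs, hT.one_one]
    _ ≤ _ := le_iSup₂_of_le r s (le_iSup (fun _ : L r s < t => T (f r) (g s)) hrs)

variable {x y b d : ℝ≥0∞}

lemma tensor_ramp_eq_zero (hT : IsLeftContTNorm T) (hL : IsRightContLOp L) (ht : t ≤ L x y)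
    (ht' : t ≠ ⊤) : tensor L T (ramp x b) (ramp y d) t = 0 := by
  refine tensor_eq_zero hT (fun _ => ramp_le_one) (fun _ => ramp_le_one) ht' fun r s hrs => ?_
  by_contra! hne
  have hxr : x ≤ r := not_lt.1 fun hr => hne.1 (ramp_of_le hr.le)
  have hys : y ≤ s := not_lt.1 fun hs => hne.2 (ramp_of_le hs.le)
  exact (hrs.trans_le ht).not_ge (hL.monotone₂ hxr hys)

lemma tensor_ramp_eq_one (hT : IsLeftContTNorm T) {x' y' : ℝ≥0∞} (hxb : x < b) (hbx' : b ≤ x')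
    (hb : b ≠ ⊤) (hyd : y < d) (hdy' : d ≤ y') (hd : d ≠ ⊤) (ht : L x' y' < t) :
    tensor L T (ramp x b) (ramp y d) t = 1 :=
  tensor_eq_one hT (fun _ => ramp_le_one) (fun _ => ramp_le_one) (ramp_of_ge hxb hb hbx')
    (ramp_of_ge hyd hd hdy') ht

end Tensor

theorem LS_of_tensor_preserves_continuity (T L : ℝ≥0∞ → ℝ≥0∞ → ℝ≥0∞)
    (hT : IsLeftContTNorm T) (hL : IsRightContLOp L)
    (h : ∀ f g : ℝ≥0∞ → ℝ≥0∞, IsDDF f → Continuous f → IsDDF g → Continuous g →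
      ContinuousOn (tensor L T f g) (Set.Ioi 0)) :
    ∀ x x' y y' : ℝ≥0∞, x < x' → y < y' → L x y < L x' y' := by
  intro x x' y y' hx hy
  by_contra! hle
  obtain ⟨b, hxb, hbx'⟩ := exists_between hx
  obtain ⟨d, hyd, hdy'⟩ := exists_between hy
  set F := tensor L T (ramp x b) (ramp y d)
  have hF : ContinuousOn F (Ioi 0) := h _ _ (isDDF_ramp hxb hbx'.ne_top) (continuous_ramp hxb)
    (isDDF_ramp hyd hdy'.ne_top) (continuous_ramp hyd)
  have hmaps : MapsTo F (Ioi 0) {0, 1} := by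
    intro t _
    rcases eq_or_ne t ⊤ with rfl | ht'
    · exact Or.inr tensor_top
    rcases le_or_gt t (L x y) with ht | ht
    · exact Or.inl (tensor_ramp_eq_zero hT hL ht ht')
    · exact Or.inr (tensor_ramp_eq_one hT hxb hbx'.le hbx'.ne_top hyd hdy'.le hdy'.ne_top
        (hle.trans_lt ht))
  have hpos : 0 < min (L x y) 1 :=
    lt_min ((zero_le : 0 ≤ x).trans_lt hx |>.trans_le (hL.le_left x' y') |>.trans_le hle) one_pos
  have hconst := isPreconnected_Ioi.constant_of_mapsTo (toFinite _).isDiscrete hF hmaps hpos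
    (mem_Ioi.2 zero_lt_top)
  have hzero : F (min (L x y) 1) = 0 :=
    tensor_ramp_eq_zero hT hL (min_le_left _ _) (min_lt_of_right_lt one_lt_top).ne
  exact zero_ne_one (hzero.symm.trans (hconst.trans tensor_top))
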